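/- arXiv:1902.05860 — 2 statements merged into one kernel-verified Lean document; each statement's English description precedes it below -/
import Mathlib

section
/- Let G be a connected simple graph on a finite vertex set V with |V| = n and graph distance dist. There exists a vertex c ∈ V such that for every probability distribution p on V and every i.i.d. sequence (X_t)_{t≥0} with law p, the capture time T = min{ t ≥ 1 : t ≥ dist(c, X_0) and X_t = X_0 } satisfies E[T] ≤ 3n/2. -/
open MeasureTheory ProbabilityTheory
open scoped ENNReal
open Finset

/-!
Take for `c` a median of `G`, a vertex minimising `∑ w, dist c w`. If `z` is the neighbour of `c`
on a shortest path to `v`, the `dist c v` vertices of a shortest path from `z` to `v` are closer to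
`z` than to `c`, while minimality of `c` allows at most half of all vertices to be closer to `z`;
hence `2 * dist c v ≤ n`.

Given `X 0 = v`, the cop is in place from turn `m v = max 1 (dist c v)` on, and each later turn
captures independently with probability `p v`, so `E[T; X 0 = v] ≤ p v * (m v - 1) + 1`. Summing,
`E[T] ≤ ∑ v, (p v * m v + 1 - p v) ≤ (n / 2 + 1) + (n - 1) = 3n / 2`.
-/

namespace SimpleGraph

variable {V : Type*} {G : SimpleGraph V}

lemma Walk.dist_add_dist_le_length [DecidableEq V] {u v w : V} (p : G.Walk u v)
    (hw : w ∈ p.support) : G.dist u w + G.dist w v ≤ p.length := by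
  rw [← p.take_spec hw, Walk.length_append]
  exact add_le_add (G.dist_le _) (G.dist_le _)

lemma Connected.exists_adj_dist_add_one_eq (hG : G.Connected) {c v : V} (hcv : c ≠ v) :
    ∃ z, G.Adj c z ∧ G.dist z v + 1 = G.dist c v := by
  obtain ⟨p, hp⟩ := hG.exists_walk_length_eq_dist c v
  cases p with
  | nil => exact absurd rfl hcv
  | @cons _ z _ hadj q =>
    refine ⟨z, hadj, le_antisymm ?_ ?_⟩
    · rw [← hp, Walk.length_cons]
      exact Nat.add_le_add_right (G.dist_le q) 1
    · calc G.dist c v ≤ G.dist c z + G.dist z v := hG.dist_triangle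
        _ = G.dist z v + 1 := by rw [dist_eq_one_iff_adj.mpr hadj, add_comm]

variable [Fintype V]

lemma Connected.dist_le_card_dist_lt (hG : G.Connected) {c z v : V}
    (hzv : G.dist z v + 1 = G.dist c v) :
    G.dist c v ≤ #{w | G.dist z w < G.dist c w} := by
  classical
  obtain ⟨Q, hQpath, hQ⟩ := hG.exists_path_of_dist z v
  calc G.dist c v = Q.support.toFinset.card := by
        rw [List.toFinset_card_of_nodup hQpath.support_nodup, Walk.length_support, hQ, hzv]
    _ ≤ _ := by
      refine Finset.card_le_card fun w hw => ?_
      rw [List.mem_toFinset] at hw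
      have hsplit := Q.dist_add_dist_le_length hw
      have hcwv : G.dist c v ≤ G.dist c w + G.dist w v := hG.dist_triangle
      simp only [Finset.mem_filter, Finset.mem_univ, true_and]
      omega

lemma Connected.sum_dist_add_two_mul_card_dist_lt_le (hG : G.Connected) {c z : V}
    (hcz : G.Adj c z) :
    ∑ w, G.dist z w + 2 * #{w | G.dist z w < G.dist c w} ≤ ∑ w, G.dist c w + Fintype.card V := by
  have hdist : G.dist z c = 1 := dist_eq_one_iff_adj.mpr hcz.symm
  rw [Finset.card_filter, Finset.mul_sum, ← Finset.card_univ, Finset.card_eq_sum_ones,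
    ← Finset.sum_add_distrib, ← Finset.sum_add_distrib]
  refine Finset.sum_le_sum fun w _ => ?_
  have htri : G.dist z w ≤ G.dist z c + G.dist c w := hG.dist_triangle
  split_ifs <;> omega

lemma Connected.exists_two_mul_dist_le_card (hG : G.Connected) :
    ∃ c, ∀ v, 2 * G.dist c v ≤ Fintype.card V := by
  have := hG.nonempty
  obtain ⟨c, -, hc⟩ := Finset.exists_min_image Finset.univ (fun c => ∑ w, G.dist c w)
    Finset.univ_nonempty
  refine ⟨c, fun v => ?_⟩
  rcases eq_or_ne c v with rfl | hcv
  · simp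
  obtain ⟨z, hcz, hzv⟩ := hG.exists_adj_dist_add_one_eq hcv
  have := hG.dist_le_card_dist_lt hzv
  have := hG.sum_dist_add_two_mul_card_dist_lt_le hcz
  have := hc z (Finset.mem_univ z)
  omega

end SimpleGraph

lemma ENNReal.le_tsum_natCast_lt (a : ℝ≥0∞) :
    a ≤ ∑' k : ℕ, if (k : ℝ≥0∞) < a then 1 else 0 := by
  rcases eq_or_ne a ⊤ with rfl | ha
  · simp
  have hex : ∃ N : ℕ, a ≤ N := (ENNReal.exists_nat_gt ha).imp fun _ => le_of_lt
  calc a ≤ Nat.find hex := Nat.find_spec hex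
    _ = ∑ k ∈ range (Nat.find hex), if (k : ℝ≥0∞) < a then 1 else 0 := by
      rw [Finset.sum_congr rfl fun k hk =>
        if_pos (not_le.mp (Nat.find_min hex (mem_range.mp hk)))]
      simp
    _ ≤ _ := ENNReal.sum_le_tsum _

lemma ENNReal.natCast_lt_sInf_iff {k : ℕ} {P : ℕ → Prop} :
    (k : ℝ≥0∞) < sInf {τ : ℝ≥0∞ | ∃ t : ℕ, τ = t ∧ P t} ↔ ∀ t, P t → k < t := by
  constructor
  · intro hk t ht
    exact_mod_cast hk.trans_le (sInf_le ⟨t, rfl, ht⟩)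
  · intro hk
    refine (Nat.cast_lt.mpr k.lt_succ_self).trans_le (le_sInf ?_)
    rintro _ ⟨t, rfl, ht⟩
    exact_mod_cast hk t ht

lemma MeasureTheory.lintegral_le_tsum_measure_natCast_lt {Ω : Type*} [MeasurableSpace Ω]
    {μ : Measure Ω} {T : Ω → ℝ≥0∞} (hT : ∀ k : ℕ, MeasurableSet {ω | (k : ℝ≥0∞) < T ω}) :
    ∫⁻ ω, T ω ∂μ ≤ ∑' k : ℕ, μ {ω | (k : ℝ≥0∞) < T ω} := by
  calc ∫⁻ ω, T ω ∂μ ≤ ∫⁻ ω, ∑' k : ℕ, {ω | (k : ℝ≥0∞) < T ω}.indicator 1 ω ∂μ := by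
        refine lintegral_mono fun ω => ?_
        simpa only [Set.indicator_apply, Set.mem_ofPred_eq, Pi.one_apply] using
          ENNReal.le_tsum_natCast_lt (T ω)
    _ = ∑' k : ℕ, μ {ω | (k : ℝ≥0∞) < T ω} := by
      rw [lintegral_tsum fun k => (measurable_one.indicator (hT k)).aemeasurable]
      exact tsum_congr fun k => lintegral_indicator_one (hT k)

lemma ENNReal.tsum_mul_pow_tsub_le {p : ℝ≥0∞} (hp : p ≤ 1) (m : ℕ) :
    ∑' k : ℕ, p * (1 - p) ^ (k + 1 - m) ≤ p * m + (1 - p) := by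
  have hhead : ∑ k ∈ range m, (1 - p) ^ (k + 1 - m) = m := by
    rw [Finset.sum_congr rfl fun k hk => by
      rw [Nat.sub_eq_zero_of_le (mem_range.mp hk), pow_zero]]
    simp
  have htail : ∑' j : ℕ, (1 - p) ^ (j + m + 1 - m) = (1 - p) * p⁻¹ := by
    simp_rw [show ∀ j, j + m + 1 - m = j + 1 by omega]
    rw [ENNReal.tsum_geometric_add_one, ENNReal.sub_sub_cancel ENNReal.one_ne_top hp]
  rw [ENNReal.tsum_mul_left, ← ENNReal.summable.sum_add_tsum_nat_add' (k := m), hhead, htail,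
    mul_add]
  gcongr
  calc p * ((1 - p) * p⁻¹) = (1 - p) * (p * p⁻¹) := by ring
    _ ≤ 1 - p := mul_le_of_le_one_right' (ENNReal.mul_inv_le_one p)

section Gambler

variable {V Ω : Type*} [MeasurableSpace V] [MeasurableSingletonClass V] [MeasurableSpace Ω]
  {μ : Measure Ω} {X : ℕ → Ω → V} {p : PMF V}

lemma ProbabilityTheory.iIndepFun.measure_preimage_singleton_inter_iInter_compl
    (hX : ∀ t, Measurable (X t)) (hind : iIndepFun X μ) (hlaw : ∀ t, μ.map (X t) = p.toMeasure)
    (v : V) {S : Finset ℕ} (hS : 0 ∉ S) :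
    μ (X 0 ⁻¹' {v} ∩ ⋂ t ∈ S, X t ⁻¹' {v}ᶜ) = p v * (1 - p v) ^ #S := by
  have hlaw' : ∀ t {s : Set V}, MeasurableSet s → μ (X t ⁻¹' s) = p.toMeasure s :=
    fun t s hs => by rw [← Measure.map_apply (hX t) hs, hlaw t]
  have hv : μ (X 0 ⁻¹' {v}) = p v := by
    rw [hlaw' 0 (measurableSet_singleton v), PMF.toMeasure_apply_singleton _ _
      (measurableSet_singleton v)]
  have hnv : ∀ t, μ (X t ⁻¹' {v}ᶜ) = 1 - p v := fun t => by
    rw [hlaw' t (measurableSet_singleton v).compl,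
      prob_compl_eq_one_sub (measurableSet_singleton v),
      PMF.toMeasure_apply_singleton _ _ (measurableSet_singleton v)]
  let s : ℕ → Set V := fun t => if t = 0 then {v} else {v}ᶜ
  have hsS : ∀ t ∈ S, s t = {v}ᶜ := fun t ht => if_neg (ne_of_mem_of_not_mem ht hS)
  have hevent : X 0 ⁻¹' {v} ∩ ⋂ t ∈ S, X t ⁻¹' {v}ᶜ = ⋂ t ∈ insert 0 S, X t ⁻¹' s t := by
    rw [Finset.set_biInter_insert]
    exact congrArg _ (Set.iInter₂_congr fun t ht => by rw [hsS t ht])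
  have hs : ∀ t ∈ insert 0 S, MeasurableSet (s t) := fun t _ => by
    simp only [s]; split_ifs <;> measurability
  rw [hevent, hind.measure_inter_preimage_eq_mul _ hs, prod_insert hS,
    Finset.prod_congr rfl fun t ht => by rw [hsS t ht, hnv t], prod_const]
  simp only [s, if_pos, hv]

variable {G : SimpleGraph V} {c : V} {T : Ω → ℝ≥0∞}
  (hT : ∀ ω, T ω = sInf {τ : ℝ≥0∞ | ∃ t : ℕ, τ = t ∧ 1 ≤ t ∧
    G.dist c (X 0 ω) ≤ t ∧ X t ω = X 0 ω})
include hT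

lemma measurableSet_natCast_lt_captureTime [Finite V] (hX : ∀ t, Measurable (X t)) (k : ℕ) :
    MeasurableSet {ω | (k : ℝ≥0∞) < T ω} := by
  have hset : {ω | (k : ℝ≥0∞) < T ω} = ⋂ t, (fun ω => (X 0 ω, X t ω)) ⁻¹'
      {x | 1 ≤ t → G.dist c x.1 ≤ t → x.2 = x.1 → k < t} := by
    ext ω
    simp [hT, ENNReal.natCast_lt_sInf_iff]
  rw [hset]
  exact MeasurableSet.iInter fun t => (hX 0).prodMk (hX t) (Set.toFinite _).measurableSet

lemma measure_natCast_lt_captureTime_inter_le (hX : ∀ t, Measurable (X t))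
    (hind : iIndepFun X μ) (hlaw : ∀ t, μ.map (X t) = p.toMeasure) (k : ℕ) (v : V) :
    μ ({ω | (k : ℝ≥0∞) < T ω} ∩ X 0 ⁻¹' {v}) ≤
      p v * (1 - p v) ^ (k + 1 - max 1 (G.dist c v)) := by
  calc μ ({ω | (k : ℝ≥0∞) < T ω} ∩ X 0 ⁻¹' {v})
      ≤ μ (X 0 ⁻¹' {v} ∩ ⋂ t ∈ Icc (max 1 (G.dist c v)) k, X t ⁻¹' {v}ᶜ) := by
        refine measure_mono fun ω ⟨hk, hv⟩ => ⟨hv, ?_⟩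
        rw [Set.mem_preimage, Set.mem_singleton_iff] at hv
        rw [Set.mem_ofPred_eq, hT ω, ENNReal.natCast_lt_sInf_iff] at hk
        simp only [Set.mem_iInter, mem_Icc, Set.mem_preimage, Set.mem_compl_iff,
          Set.mem_singleton_iff]
        intro t ⟨hmt, htk⟩ hXt
        have := hk t ⟨by omega, by rw [hv]; omega, hXt.trans hv.symm⟩
        omega
    _ = p v * (1 - p v) ^ (k + 1 - max 1 (G.dist c v)) := by
        rw [hind.measure_preimage_singleton_inter_iInter_compl hX hlaw v (by simp),
          Nat.card_Icc]

lemma lintegral_captureTime_le [Fintype V] (hX : ∀ t, Measurable (X t))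
    (hind : iIndepFun X μ) (hlaw : ∀ t, μ.map (X t) = p.toMeasure) :
    ∫⁻ ω, T ω ∂μ ≤ ∑ v, (p v * ((max 1 (G.dist c v) : ℕ) : ℝ≥0∞) + (1 - p v)) := by
  calc ∫⁻ ω, T ω ∂μ ≤ ∑' k : ℕ, μ {ω | (k : ℝ≥0∞) < T ω} :=
        lintegral_le_tsum_measure_natCast_lt (measurableSet_natCast_lt_captureTime hT hX)
    _ ≤ ∑' k : ℕ, ∑ v, p v * (1 - p v) ^ (k + 1 - max 1 (G.dist c v)) := by
        refine ENNReal.tsum_le_tsum fun k => ?_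
        have hcover : {ω | (k : ℝ≥0∞) < T ω} ⊆ ⋃ v, {ω | (k : ℝ≥0∞) < T ω} ∩ X 0 ⁻¹' {v} :=
          fun ω hω => Set.mem_iUnion.mpr ⟨X 0 ω, hω, rfl⟩
        refine (measure_mono hcover).trans ((measure_iUnion_fintype_le μ _).trans ?_)
        exact sum_le_sum fun v _ => measure_natCast_lt_captureTime_inter_le hT hX hind hlaw k v
    _ = ∑ v, ∑' k : ℕ, p v * (1 - p v) ^ (k + 1 - max 1 (G.dist c v)) := by
        rw [Summable.tsum_finsetSum fun _ _ => ENNReal.summable]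
    _ ≤ _ := sum_le_sum fun v _ => ENNReal.tsum_mul_pow_tsub_le (p.coe_le_one v) _

end Gambler

lemma PMF.sum_mul_add_one_sub_add_one_le {V : Type*} [Fintype V] (p : PMF V)
    {m : V → ℝ≥0∞} {b : ℝ≥0∞} (hm : ∀ v, m v ≤ b) :
    ∑ v, (p v * m v + (1 - p v)) + 1 ≤ b + Fintype.card V := by
  have hsum : ∑ v, p v = 1 := (tsum_fintype _).symm.trans p.tsum_coe
  calc ∑ v, (p v * m v + (1 - p v)) + 1 = ∑ v, p v * m v + ∑ v, ((1 - p v) + p v) := by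
        rw [sum_add_distrib, sum_add_distrib, hsum, add_assoc]
    _ ≤ ∑ v, p v * b + ∑ v, (1 : ℝ≥0∞) := by
        gcongr with v
        · exact hm v
        · exact (tsub_add_cancel_of_le (p.coe_le_one v)).le
    _ = b + Fintype.card V := by rw [← sum_mul, hsum, one_mul, sum_const, card_univ, nsmul_one]

theorem wmw1_expected_capture_time_le_three_halves_general
    {V : Type*} [Fintype V]
    [MeasurableSpace V] [MeasurableSingletonClass V]
    (G : SimpleGraph V) (hG : G.Connected)
    (n : ℕ) (hn : Fintype.card V = n) :
    ∃ c : V,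
      ∀ (p : PMF V) (Ω : Type) (_ : MeasurableSpace Ω) (μ : Measure Ω)
        (_ : IsProbabilityMeasure μ) (X : ℕ → Ω → V),
        (∀ t, Measurable (X t)) →
        iIndepFun X μ →
        (∀ t, μ.map (X t) = p.toMeasure) →
        ∀ T : Ω → ℝ≥0∞,
        (∀ ω, T ω = sInf {τ : ℝ≥0∞ | ∃ t : ℕ, τ = t ∧ 1 ≤ t ∧
          G.dist c (X 0 ω) ≤ t ∧ X t ω = X 0 ω}) →
        ∫⁻ ω, T ω ∂μ ≤ 3 * (n : ℝ≥0∞) / 2 := by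
  obtain ⟨c, hc⟩ := hG.exists_two_mul_dist_le_card
  refine ⟨c, fun p Ω _ μ _ X hX hind hlaw T hT => ?_⟩
  have hm : ∀ v, ((max 1 (G.dist c v) : ℕ) : ℝ≥0∞) ≤ n / 2 + 1 := fun v => by
    have hhalf : (G.dist c v : ℝ≥0∞) ≤ n / 2 := by
      rw [ENNReal.le_div_iff_mul_le (by simp) (by simp), mul_comm, ← hn]
      exact_mod_cast hc v
    calc ((max 1 (G.dist c v) : ℕ) : ℝ≥0∞) ≤ G.dist c v + 1 := by
          exact_mod_cast max_le (by omega) (by omega)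
      _ ≤ n / 2 + 1 := by gcongr
  have hsum := p.sum_mul_add_one_sub_add_one_le hm
  rw [hn, add_right_comm, ENNReal.add_le_add_iff_right ENNReal.one_ne_top] at hsum
  calc ∫⁻ ω, T ω ∂μ ≤ _ := lintegral_captureTime_le hT hX hind hlaw
    _ ≤ n / 2 + n := hsum
    _ = 3 * (n : ℝ≥0∞) / 2 := by
        rw [show (3 : ℝ≥0∞) * n = n + 2 * n by ring, ENNReal.add_div,
          mul_comm, ENNReal.mul_div_cancel_right two_ne_zero ENNReal.ofNat_ne_top]

/-- On any connected `n`-vertex graph there is a start vertex `c`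
(a center) such that Watch-Move-Wait against the 1-observed gambler has expected
capture time at most `3n/2`. -/
theorem wmw1_expected_capture_time_le_three_halves
    {V : Type*} [Fintype V] [DecidableEq V]
    [MeasurableSpace V] [MeasurableSingletonClass V]
    (G : SimpleGraph V) (hG : G.Connected)
    (n : ℕ) (hn : Fintype.card V = n) :
    ∃ c : V,
      ∀ (p : PMF V) (Ω : Type) (_ : MeasurableSpace Ω) (μ : Measure Ω)
        (_ : IsProbabilityMeasure μ) (X : ℕ → Ω → V),
        (∀ t, Measurable (X t)) →
        iIndepFun X μ →
        (∀ t, μ.map (X t) = p.toMeasure) →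
        ∀ T : Ω → ℝ≥0∞,
        (∀ ω, T ω = sInf {τ : ℝ≥0∞ | ∃ t : ℕ, τ = t ∧ 1 ≤ t ∧
          G.dist c (X 0 ω) ≤ t ∧ X t ω = X 0 ω}) →
        ∫⁻ ω, T ω ∂μ ≤ 3 * (n : ℝ≥0∞) / 2 :=
  wmw1_expected_capture_time_le_three_halves_general G hG n hn
end

section
/- Let n ≥ 2, let G be the star on n vertices with center u (u adjacent to each of the other n − 1 vertices, no other edges), let dist denote graph distance, and let k be a positive integer with k ≤ n − 1. Then there exist response functions f_1, …, f_k : V → V such that for every probability distribution p on V and every i.i.d. sequence (X_t)_{t≥0} with law p, the capture time T = min{ t ≥ 1 : there exists j with t ≥ dist(u, f_j(X_0)) and X_t = f_j(X_0) } satisfies E[T] ≤ (n−1)/k + 3. -/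
/-!
Split the `n` vertices into `⌈n / k⌉` blocks of at most `k` vertices each, and let the cops occupy
the whole block of the observed position `X₀`. On a star every target is within one step of the
center, so capture happens at the first `t ≥ 1` with `X_t` in the block `B` of `X₀`. Given
`X₀ = v`, this time is geometric with success probability `p(B_v)`, hence
`E[T] = ∑_v p(v) / p(B_v) = #{blocks of positive mass} ≤ ⌈n / k⌉ ≤ (n - 1) / k + 1`.
-/

open MeasureTheory ProbabilityTheory Set Finset
open scoped ENNReal

noncomputable def firstHitTime (P : ℕ → Prop) : ℝ≥0∞ :=
  sInf {τ | ∃ t : ℕ, τ = t ∧ 1 ≤ t ∧ P t}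

lemma firstHitTime_congr {P Q : ℕ → Prop} (h : ∀ t, 1 ≤ t → (P t ↔ Q t)) :
    firstHitTime P = firstHitTime Q := by
  unfold firstHitTime
  congr 1
  ext τ
  exact exists_congr fun t => and_congr_right fun _ =>
    ⟨fun ⟨ht, hP⟩ => ⟨ht, (h t ht).1 hP⟩, fun ⟨ht, hQ⟩ => ⟨ht, (h t ht).2 hQ⟩⟩

lemma natCast_lt_firstHitTime_iff {P : ℕ → Prop} {t : ℕ} :
    (t : ℝ≥0∞) < firstHitTime P ↔ ∀ s, 1 ≤ s → s ≤ t → ¬ P s := by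
  constructor
  · intro h s hs hst hP
    exact (h.trans_le (sInf_le ⟨s, rfl, hs, hP⟩)).not_ge (by exact_mod_cast hst)
  · intro h
    refine (ENNReal.lt_add_right (ENNReal.natCast_ne_top t) one_ne_zero).trans_le (le_sInf ?_)
    rintro _ ⟨s, rfl, hs, hP⟩
    have : t + 1 ≤ s := by
      by_contra! hlt
      exact h s hs (by omega) hP
    exact_mod_cast this

lemma exists_enat_eq_firstHitTime (P : ℕ → Prop) : ∃ a : ℕ∞, firstHitTime P = a := by
  classical
  by_cases h : ∃ s, 1 ≤ s ∧ P s
  · refine ⟨Nat.find h, le_antisymm ?_ (le_sInf ?_)⟩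
    · exact sInf_le ⟨Nat.find h, by simp, Nat.find_spec h⟩
    · rintro _ ⟨s, rfl, hs, hP⟩
      exact_mod_cast Nat.find_min' h ⟨hs, hP⟩
  · refine ⟨⊤, ?_⟩
    rw [ENat.toENNReal_top, firstHitTime, sInf_eq_top]
    rintro _ ⟨s, rfl, hs, hP⟩
    exact absurd ⟨s, hs, hP⟩ h

lemma tsum_ite_natCast_lt (a : ℕ∞) :
    ∑' t : ℕ, (if (t : ℝ≥0∞) < a then 1 else 0) = (a : ℝ≥0∞) := by
  induction a using ENat.recTopCoe with
  | top => simp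
  | coe m =>
    rw [tsum_eq_sum (s := range m) fun t ht => by simpa using ht,
      sum_ite_of_true fun t ht => by simpa using ht]
    simp

lemma lintegral_eq_tsum_measure_natCast_lt {Ω : Type*} [MeasurableSpace Ω] {μ : Measure Ω}
    {T : Ω → ℝ≥0∞} (hT : ∀ ω, ∃ a : ℕ∞, T ω = a)
    (hmeas : ∀ t : ℕ, MeasurableSet {ω | (t : ℝ≥0∞) < T ω}) :
    ∫⁻ ω, T ω ∂μ = ∑' t : ℕ, μ {ω | (t : ℝ≥0∞) < T ω} := by
  calc ∫⁻ ω, T ω ∂μ = ∫⁻ ω, ∑' t : ℕ, {ω | (t : ℝ≥0∞) < T ω}.indicator 1 ω ∂μ := by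
        refine lintegral_congr fun ω => ?_
        obtain ⟨a, ha⟩ := hT ω
        simp only [indicator_apply, mem_ofPred_eq, Pi.one_apply, ha, tsum_ite_natCast_lt]
    _ = ∑' t : ℕ, μ {ω | (t : ℝ≥0∞) < T ω} := by
        rw [lintegral_tsum fun t => (measurable_one.indicator (hmeas t)).aemeasurable]
        simp only [lintegral_indicator_one (hmeas _)]

section FirstVisitTime

variable {Ω V : Type*}

noncomputable def firstVisitTime (X : ℕ → Ω → V) (A : V → Set V) (ω : Ω) : ℝ≥0∞ :=
  firstHitTime fun t => X t ω ∈ A (X 0 ω)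

lemma setOf_natCast_lt_firstVisitTime (X : ℕ → Ω → V) (A : V → Set V) (t : ℕ) :
    {ω | (t : ℝ≥0∞) < firstVisitTime X A ω} =
      ⋃ v, ⋂ s ∈ range (t + 1), X s ⁻¹' (if s = 0 then {v} else (A v)ᶜ) := by
  ext ω
  simp only [firstVisitTime, mem_ofPred_eq, natCast_lt_firstHitTime_iff, mem_iUnion, mem_iInter,
    Finset.mem_range, Set.mem_preimage]
  constructor
  · intro h
    refine ⟨X 0 ω, fun s hs => ?_⟩
    split_ifs with h0
    · subst h0
      rfl
    · exact h s (by omega) (by omega)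
  · rintro ⟨v, hv⟩ s hs hst
    have h0 : X 0 ω = v := by simpa using hv 0 (by omega)
    have hs' := hv s (by omega)
    rw [if_neg (by omega)] at hs'
    rwa [h0]

variable [MeasurableSpace Ω] [MeasurableSpace V] [Countable V] [MeasurableSingletonClass V]
  {μ : Measure Ω} {ν : Measure V} {X : ℕ → Ω → V}

lemma measurableSet_natCast_lt_firstVisitTime (hX : ∀ t, Measurable (X t)) (A : V → Set V)
    (t : ℕ) : MeasurableSet {ω | (t : ℝ≥0∞) < firstVisitTime X A ω} := by
  rw [setOf_natCast_lt_firstVisitTime]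
  exact .iUnion fun v => .biInter (Finset.countable_toSet _) fun s _ => hX s .of_discrete

lemma measure_natCast_lt_firstVisitTime (hX : ∀ t, Measurable (X t)) (hind : iIndepFun X μ)
    (hlaw : ∀ t, μ.map (X t) = ν) (A : V → Set V) (t : ℕ) :
    μ {ω | (t : ℝ≥0∞) < firstVisitTime X A ω} = ∑' v, ν {v} * ν (A v)ᶜ ^ t := by
  have hpre (s : ℕ) (B : Set V) : μ (X s ⁻¹' B) = ν B := by
    rw [← hlaw s, Measure.map_apply (hX s) .of_discrete]
  rw [setOf_natCast_lt_firstVisitTime, measure_iUnion]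
  · refine tsum_congr fun v => ?_
    rw [hind.meas_biInter fun s _ => ⟨_, .of_discrete, rfl⟩, prod_range_succ']
    simp only [Nat.add_one_ne_zero, if_false, if_true, hpre, prod_const, card_range, mul_comm]
  · intro v w hvw
    refine Set.disjoint_left.2 fun ω hv hw => hvw ?_
    simp only [mem_iInter] at hv hw
    simpa using (hv 0 (by simp)).symm.trans (hw 0 (by simp))
  · exact fun v => .biInter (Finset.countable_toSet _) fun s _ => hX s .of_discrete

lemma lintegral_firstVisitTime [IsProbabilityMeasure μ] (hX : ∀ t, Measurable (X t))
    (hind : iIndepFun X μ) (hlaw : ∀ t, μ.map (X t) = ν) (A : V → Set V) :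
    ∫⁻ ω, firstVisitTime X A ω ∂μ = ∑' v, ν {v} * (ν (A v))⁻¹ := by
  have : IsProbabilityMeasure ν := hlaw 0 ▸ Measure.isProbabilityMeasure_map (hX 0).aemeasurable
  rw [lintegral_eq_tsum_measure_natCast_lt (T := firstVisitTime X A)
    (fun ω => exists_enat_eq_firstHitTime _) (measurableSet_natCast_lt_firstVisitTime hX A)]
  simp_rw [measure_natCast_lt_firstVisitTime hX hind hlaw]
  rw [ENNReal.tsum_comm]
  refine tsum_congr fun v => ?_
  rw [ENNReal.tsum_mul_left, ENNReal.tsum_geometric, prob_compl_eq_one_sub .of_discrete,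
    ENNReal.sub_sub_cancel ENNReal.one_ne_top prob_le_one]

end FirstVisitTime

lemma sum_measure_singleton_mul_inv_measure_fiber_le {V β : Type*} [Fintype V]
    [MeasurableSpace V] [MeasurableSingletonClass V] [DecidableEq β] (ν : Measure V) (b : V → β) :
    ∑ v, ν {v} * (ν (b ⁻¹' {b v}))⁻¹ ≤ #(univ.image b) := by
  rw [← sum_fiberwise_of_maps_to fun v _ => mem_image_of_mem b (mem_univ v)]
  calc _ ≤ ∑ _c ∈ univ.image b, (1 : ℝ≥0∞) := sum_le_sum fun c _ => ?_
    _ = #(univ.image b) := by simp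
  have hfiber : ((univ.filter fun v => b v = c : Finset V) : Set V) = b ⁻¹' {c} := by ext; simp
  rw [sum_congr rfl fun v hv => by rw [(mem_filter.1 hv).2], ← sum_mul, sum_measure_singleton,
    hfiber]
  exact ENNReal.mul_inv_le_one _

lemma SimpleGraph.dist_le_one_of_forall_adj {V : Type*} {G : SimpleGraph V} {u : V}
    (h : ∀ w, w ≠ u → G.Adj u w) (w : V) : G.dist u w ≤ 1 := by
  rcases eq_or_ne w u with rfl | hw
  · simp
  · exact (SimpleGraph.dist_eq_one_iff_adj.2 (h w hw)).le

section BlockStrategy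

variable {V : Type*} {n : ℕ} (e : V ≃ Fin n)

/-- Cop `j` goes to the `j`-th vertex of the block of `v`; in a short last block the surplus cops
target `v` itself. -/
def blockStrategy (k : ℕ) (j : Fin k) (v : V) : V :=
  if h : (e v : ℕ) / k * k + j < n then e.symm ⟨(e v : ℕ) / k * k + j, h⟩ else v

lemma exists_blockStrategy_eq_iff {k : ℕ} (hk : 0 < k) (v w : V) :
    (∃ j, blockStrategy e k j v = w) ↔ (e w : ℕ) / k = (e v : ℕ) / k := by
  constructor
  · rintro ⟨j, rfl⟩
    unfold blockStrategy
    split_ifs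
    · rw [Equiv.apply_symm_apply, Fin.val_mk, add_comm, Nat.add_mul_div_right _ _ hk,
        Nat.div_eq_of_lt j.isLt, zero_add]
    · rfl
  · intro hvw
    have hw : (e v : ℕ) / k * k + (e w : ℕ) % k = e w := by
      rw [← hvw]
      exact Nat.div_add_mod' _ _
    refine ⟨⟨(e w : ℕ) % k, Nat.mod_lt _ hk⟩, ?_⟩
    have hlt : (e v : ℕ) / k * k + (e w : ℕ) % k < n := by
      rw [hw]
      exact (e w).isLt
    rw [blockStrategy, dif_pos hlt, Equiv.symm_apply_eq]
    exact Fin.ext hw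

lemma card_image_div_le [Fintype V] (k : ℕ) :
    #(univ.image fun v => (e v : ℕ) / k) ≤ (n - 1) / k + 1 := by
  refine (card_le_card fun c hc => ?_).trans_eq (card_range _)
  obtain ⟨v, -, rfl⟩ := mem_image.1 hc
  have := Nat.div_le_div_right (c := k) (Nat.le_sub_one_of_lt (e v).isLt)
  exact Finset.mem_range.2 (by omega)

end BlockStrategy

lemma ENNReal.natCast_div_le (a k : ℕ) : ((a / k : ℕ) : ℝ≥0∞) ≤ a / k := by
  rcases k.eq_zero_or_pos with rfl | hk
  · simp
  rw [ENNReal.le_div_iff_mul_le (by simp [hk.ne']) (by simp), ← Nat.cast_mul]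
  exact_mod_cast Nat.div_mul_le_self a k

lemma natCast_div_add_one_le (n k : ℕ) :
    (((n - 1) / k + 1 : ℕ) : ℝ≥0∞) ≤ ((n : ℝ≥0∞) - 1) / k + 3 := by
  have h := ENNReal.natCast_div_le (n - 1) k
  rw [ENNReal.natCast_sub, Nat.cast_one] at h
  push_cast
  exact add_le_add h (by norm_num)

theorem distributed_wmw1_star_expected_capture_time_le_general
    {V : Type*} [Fintype V]
    [MeasurableSpace V] [MeasurableSingletonClass V]
    (n : ℕ)
    (G : SimpleGraph V) (hn : Fintype.card V = n)
    (u : V) (hstar : ∀ a b : V, G.Adj a b ↔ ((a = u ∧ b ≠ u) ∨ (b = u ∧ a ≠ u)))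
    (k : ℕ) (hk : 0 < k) :
    ∃ f : Fin k → V → V,
      ∀ (p : PMF V) (Ω : Type) (_ : MeasurableSpace Ω) (μ : Measure Ω)
        (_ : IsProbabilityMeasure μ) (X : ℕ → Ω → V),
        (∀ t, Measurable (X t)) →
        iIndepFun X μ →
        (∀ t, μ.map (X t) = p.toMeasure) →
        ∀ T : Ω → ℝ≥0∞,
        (∀ ω, T ω = sInf {τ : ℝ≥0∞ | ∃ t : ℕ, τ = t ∧ 1 ≤ t ∧
          ∃ j : Fin k, G.dist u (f j (X 0 ω)) ≤ t ∧ X t ω = f j (X 0 ω)}) →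
        ∫⁻ ω, T ω ∂μ ≤ ((n : ℝ≥0∞) - 1) / (k : ℝ≥0∞) + 3 := by
  have e : V ≃ Fin n := Fintype.equivFinOfCardEq hn
  refine ⟨blockStrategy e k, fun p Ω _ μ _ X hX hind hlaw T hT => ?_⟩
  have hdist := G.dist_le_one_of_forall_adj fun w hw => (hstar u w).2 (.inl ⟨rfl, hw⟩)
  set block : V → ℕ := fun v => (e v : ℕ) / k
  have hT_eq : T = firstVisitTime X fun v => block ⁻¹' {block v} := by
    funext ω
    refine (hT ω).trans (firstHitTime_congr fun t ht => ?_)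
    rw [Set.mem_preimage, Set.mem_singleton_iff, ← exists_blockStrategy_eq_iff e hk]
    exact exists_congr fun j => ⟨fun h => h.2.symm, fun h => ⟨(hdist _).trans ht, h.symm⟩⟩
  calc ∫⁻ ω, T ω ∂μ = ∑ v, p.toMeasure {v} * (p.toMeasure (block ⁻¹' {block v}))⁻¹ := by
        rw [hT_eq, lintegral_firstVisitTime hX hind hlaw, tsum_fintype]
    _ ≤ #(univ.image block) := sum_measure_singleton_mul_inv_measure_fiber_le _ block
    _ ≤ (((n - 1) / k + 1 : ℕ) : ℝ≥0∞) := by exact_mod_cast card_image_div_le e k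
    _ ≤ ((n : ℝ≥0∞) - 1) / k + 3 := natCast_div_add_one_le n k

/-- A distributed Watch-Move-Wait strategy for `k` cops against the
1-observed gambler on the `n`-vertex star (all cops starting at the center `u`)
achieves expected capture time at most `(n−1)/k + 3`. -/
theorem distributed_wmw1_star_expected_capture_time_le
    {V : Type*} [Fintype V] [DecidableEq V]
    [MeasurableSpace V] [MeasurableSingletonClass V]
    (n : ℕ) (hn2 : 2 ≤ n)
    (G : SimpleGraph V) (hn : Fintype.card V = n)
    (u : V) (hstar : ∀ a b : V, G.Adj a b ↔ ((a = u ∧ b ≠ u) ∨ (b = u ∧ a ≠ u)))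
    (k : ℕ) (hk : 0 < k) (hkn : k ≤ n - 1) :
    ∃ f : Fin k → V → V,
      ∀ (p : PMF V) (Ω : Type) (_ : MeasurableSpace Ω) (μ : Measure Ω)
        (_ : IsProbabilityMeasure μ) (X : ℕ → Ω → V),
        (∀ t, Measurable (X t)) →
        iIndepFun X μ →
        (∀ t, μ.map (X t) = p.toMeasure) →
        ∀ T : Ω → ℝ≥0∞,
        (∀ ω, T ω = sInf {τ : ℝ≥0∞ | ∃ t : ℕ, τ = t ∧ 1 ≤ t ∧
          ∃ j : Fin k, G.dist u (f j (X 0 ω)) ≤ t ∧ X t ω = f j (X 0 ω)}) →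
        ∫⁻ ω, T ω ∂μ ≤ ((n : ℝ≥0∞) - 1) / (k : ℝ≥0∞) + 3 :=
  distributed_wmw1_star_expected_capture_time_le_general n G hn u hstar k hk
end
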